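/- Strong finitary model property of LP_CS: for every constant specification CS for LP there exist computable functions f, g, h : ℕ → ℕ such that for every formula A not derivable in the Hilbert system LP_CS there is a finitary Fitting model M = (W,R,E,ν) for LP_CS, with E the minimal admissible evidence relation containing a finite base B, and a world w ∈ W with M,w ⊮ A, |W| ≤ f(|A|), |B| ≤ g(|A|), and |{(w,p) : w ∈ ν(p)}| ≤ h(|A|), where |A| denotes the number of symbols of A and |·| denotes cardinality. -/

import Mathlib

namespace JustificationLogic

/-- Justification terms: constants, variables, application, sum, and proof checker `!`. -/
inductive Term : Type
  | const : ℕ → Term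
  | var : ℕ → Term
  | app : Term → Term → Term
  | sum : Term → Term → Term
  | bang : Term → Term
  deriving DecidableEq

/-- Formulas of justification logic: atoms, negation, implication, and `t : A`. -/
inductive Formula : Type
  | atom : ℕ → Formula
  | neg : Formula → Formula
  | impl : Formula → Formula → Formula
  | just : Term → Formula → Formula
  deriving DecidableEq

/-- Disjunction, defined classically: `A ∨ B := ¬A → B`. -/
def Formula.or (A B : Formula) : Formula := (Formula.neg A).impl B

/-- Falsum, defined as the negation of a propositional tautology. -/
def Formula.falsum : Formula := Formula.neg ((Formula.atom 0).impl (Formula.atom 0))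

/-- Number of symbols of a term. -/
def Term.size : Term → ℕ
  | .const _ => 1
  | .var _ => 1
  | .app s t => s.size + t.size + 1
  | .sum s t => s.size + t.size + 1
  | .bang t => t.size + 1

/-- Number of symbols of a formula. -/
def Formula.size : Formula → ℕ
  | .atom _ => 1
  | .neg A => A.size + 1
  | .impl A B => A.size + B.size + 1
  | .just t A => t.size + A.size + 1

/-- An explicit numerical code for terms (an injective Gödel numbering). -/
def Term.code : Term → ℕ
  | .const n => Nat.pair 0 n
  | .var n => Nat.pair 1 n
  | .app s t => Nat.pair 2 (Nat.pair s.code t.code)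
  | .sum s t => Nat.pair 3 (Nat.pair s.code t.code)
  | .bang t => Nat.pair 4 t.code

/-- An explicit numerical code for formulas (an injective Gödel numbering). -/
def Formula.code : Formula → ℕ
  | .atom n => Nat.pair 0 n
  | .neg A => Nat.pair 1 A.code
  | .impl A B => Nat.pair 2 (Nat.pair A.code B.code)
  | .just t A => Nat.pair 3 (Nat.pair t.code A.code)

/-- Substitution of terms for term variables. -/
def Term.subst (σ : ℕ → Term) : Term → Term
  | .const n => .const n
  | .var n => σ n
  | .app s t => .app (s.subst σ) (t.subst σ)
  | .sum s t => .sum (s.subst σ) (t.subst σ)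
  | .bang t => .bang (t.subst σ)

/-- Simultaneous substitution of terms for term variables and formulas for atoms. -/
def Formula.subst (σ : ℕ → Term) (τ : ℕ → Formula) : Formula → Formula
  | .atom n => τ n
  | .neg A => .neg (A.subst σ τ)
  | .impl A B => .impl (A.subst σ τ) (B.subst σ τ)
  | .just t A => .just (t.subst σ) (A.subst σ τ)

/-- `towerT c n = !ⁿc`. -/
def towerT (c : Term) : ℕ → Term
  | 0 => c
  | n + 1 => Term.bang (towerT c n)

/-- `towerF c A n = !ⁿ⁻¹c : ⋯ : !c : c : A` (and `A` for `n = 0`), so that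
`(towerT c n) : (towerF c A n)` is the `n`-th formula produced by the rule (AN!). -/
def towerF (c : Term) (A : Formula) : ℕ → Formula
  | 0 => A
  | n + 1 => Formula.just (towerT c n) (towerF c A n)

/-- The axioms of the justification logics considered, with switches `hd`, `ht`, `h4`
for the axioms (jd), (jt), (j4).  The propositional part (A1) is given by three
standard Hilbert-style schemes axiomatizing classical propositional logic. -/
inductive Ax (hd ht h4 : Bool) : Formula → Prop
  | k (A B : Formula) : Ax hd ht h4 (A.impl (B.impl A))
  | s (A B C : Formula) :
      Ax hd ht h4 ((A.impl (B.impl C)).impl ((A.impl B).impl (A.impl C)))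
  | dn (A B : Formula) :
      Ax hd ht h4 (((A.neg).impl (B.neg)).impl (B.impl A))
  | a2 (t s : Term) (A B : Formula) :
      Ax hd ht h4 ((Formula.just t (A.impl B)).impl
        ((Formula.just s A).impl (Formula.just (Term.app t s) B)))
  | a3 (t s : Term) (A : Formula) :
      Ax hd ht h4 (((Formula.just t A).or (Formula.just s A)).impl
        (Formula.just (Term.sum t s) A))
  | jd (t : Term) : hd = true →
      Ax hd ht h4 ((Formula.just t Formula.falsum).impl Formula.falsum)
  | jt (t : Term) (A : Formula) : ht = true →
      Ax hd ht h4 ((Formula.just t A).impl A)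
  | j4 (t : Term) (A : Formula) : h4 = true →
      Ax hd ht h4 ((Formula.just t A).impl
        (Formula.just (Term.bang t) (Formula.just t A)))

/-- Axioms of the respective logics. -/
def AxJ : Formula → Prop := Ax false false false
def AxJT : Formula → Prop := Ax false true false
def AxJD : Formula → Prop := Ax true false false
def AxJ4 : Formula → Prop := Ax false false true
def AxJD4 : Formula → Prop := Ax true false true
def AxLP : Formula → Prop := Ax false true true

/-- `CS` is a constant specification for the logic with axioms `Axm`:
every member of `CS` is of the form `c : A` with `c` a constant and `A` an axiom. -/
def ConstSpec (Axm : Formula → Prop) (CS : Set Formula) : Prop :=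
  ∀ F ∈ CS, ∃ (c : ℕ) (A : Formula), F = Formula.just (Term.const c) A ∧ Axm A

/-- `CS` is axiomatically appropriate for axioms `Axm`:
for every axiom `A` there is a constant `c` with `c : A ∈ CS`. -/
def AxApprop (Axm : Formula → Prop) (CS : Set Formula) : Prop :=
  ∀ A : Formula, Axm A → ∃ c : ℕ, Formula.just (Term.const c) A ∈ CS

/-- `CS` is schematic: the set of axioms justified by a given constant consists of
axiom schemes, i.e. it is closed under simultaneous substitution of terms for term
variables and formulas for atomic propositions. -/
def Schematic (CS : Set Formula) : Prop :=
  ∀ (c : ℕ) (A : Formula), Formula.just (Term.const c) A ∈ CS →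
    ∀ (σ : ℕ → Term) (τ : ℕ → Formula),
      Formula.just (Term.const c) (A.subst σ τ) ∈ CS

/-- `CS` is decidable: some computable function decides membership in `CS`
(via the explicit Gödel numbering of formulas). -/
def DecidableCS (CS : Set Formula) : Prop :=
  ∃ C : ℕ → Bool, Computable C ∧ ∀ F : Formula, F ∈ CS ↔ C F.code = true

/-- Hilbert-style derivability with the iterated axiom necessitation rule (AN!):
from `c : A ∈ CS` infer `!ⁿc : !ⁿ⁻¹c : ⋯ : !c : c : A` for every `n ≥ 0`. -/
inductive DerivB (Axm : Formula → Prop) (CS : Set Formula) : Formula → Prop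
  | ax {A : Formula} : Axm A → DerivB Axm CS A
  | mp {A B : Formula} : DerivB Axm CS (A.impl B) → DerivB Axm CS A → DerivB Axm CS B
  | an (c : ℕ) (A : Formula) (n : ℕ) :
      Formula.just (Term.const c) A ∈ CS →
      DerivB Axm CS (Formula.just (towerT (Term.const c) n) (towerF (Term.const c) A n))

/-- Hilbert-style derivability with the simple axiom necessitation rule (AN):
from `c : A ∈ CS` infer `c : A`. -/
inductive DerivS (Axm : Formula → Prop) (CS : Set Formula) : Formula → Prop
  | ax {A : Formula} : Axm A → DerivS Axm CS A
  | mp {A B : Formula} : DerivS Axm CS (A.impl B) → DerivS Axm CS A → DerivS Axm CS B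
  | an (c : ℕ) (A : Formula) :
      Formula.just (Term.const c) A ∈ CS →
      DerivS Axm CS (Formula.just (Term.const c) A)

/-- A structure for Fitting models: a nonempty set of worlds, an accessibility
relation, an evidence relation and a valuation. -/
structure Model : Type 1 where
  World : Type
  nonempty : Nonempty World
  R : World → World → Prop
  E : Term → Formula → World → Prop
  val : ℕ → World → Prop

/-- The satisfaction relation `M, w ⊩ A`. -/
def Sat (M : Model) : Formula → M.World → Prop
  | .atom n, w => M.val n w
  | .neg A, w => ¬ Sat M A w
  | .impl A B, w => Sat M A w → Sat M B w
  | .just t A, w => M.E t A w ∧ ∀ v : M.World, M.R w v → Sat M A v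

/-- The evidence relation of a model, as a set of triples. -/
def EvSet (M : Model) : Set (Term × Formula × M.World) :=
  {x | M.E x.1 x.2.1 x.2.2}

/-- The graph of the valuation: the set `{(w, p) | w ∈ ν(p)}`. -/
def ValSet (M : Model) : Set (M.World × ℕ) :=
  {p | M.val p.2 p.1}

/-- Seriality of a relation: every world has a successor. -/
def Serial {W : Type} (R : W → W → Prop) : Prop := ∀ w : W, ∃ v : W, R w v

/-- Admissible evidence relation for the logics without the (j4) axiom:
closure under sum and application, and the constant specification condition
with iterated `!`. -/
def AdmissibleBang (CS : Set Formula) {W : Type}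
    (E : Set (Term × Formula × W)) : Prop :=
  (∀ (s t : Term) (A : Formula) (w : W),
      ((s, A, w) ∈ E ∨ (t, A, w) ∈ E) → (Term.sum s t, A, w) ∈ E) ∧
  (∀ (s t : Term) (A B : Formula) (w : W),
      (s, A.impl B, w) ∈ E → (t, A, w) ∈ E → (Term.app s t, B, w) ∈ E) ∧
  (∀ (c : ℕ) (A : Formula) (w : W) (n : ℕ),
      Formula.just (Term.const c) A ∈ CS →
      (towerT (Term.const c) n, towerF (Term.const c) A n, w) ∈ E)

/-- Admissible evidence relation for the logics with the (j4) axiom: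
closure under sum and application, the simple constant specification condition,
closure under `!`, and monotonicity along the accessibility relation. -/
def AdmissibleJ4 (CS : Set Formula) {W : Type} (R : W → W → Prop)
    (E : Set (Term × Formula × W)) : Prop :=
  (∀ (s t : Term) (A : Formula) (w : W),
      ((s, A, w) ∈ E ∨ (t, A, w) ∈ E) → (Term.sum s t, A, w) ∈ E) ∧
  (∀ (s t : Term) (A B : Formula) (w : W),
      (s, A.impl B, w) ∈ E → (t, A, w) ∈ E → (Term.app s t, B, w) ∈ E) ∧
  (∀ (c : ℕ) (A : Formula) (w : W),
      Formula.just (Term.const c) A ∈ CS → (Term.const c, A, w) ∈ E) ∧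
  (∀ (t : Term) (A : Formula) (w : W),
      (t, A, w) ∈ E → (Term.bang t, Formula.just t A, w) ∈ E) ∧
  (∀ (t : Term) (A : Formula) (w v : W),
      (t, A, w) ∈ E → R w v → (t, A, v) ∈ E)

/-- `M` is a Fitting model for `J_CS`. -/
def IsModelJ (CS : Set Formula) (M : Model) : Prop :=
  AdmissibleBang CS (EvSet M)

/-- `M` is a Fitting model for `JT_CS`: additionally `R` is reflexive. -/
def IsModelJT (CS : Set Formula) (M : Model) : Prop :=
  Reflexive M.R ∧ AdmissibleBang CS (EvSet M)

/-- `M` is a Fitting model for `JD_CS`: additionally `R` is serial. -/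
def IsModelJD (CS : Set Formula) (M : Model) : Prop :=
  Serial M.R ∧ AdmissibleBang CS (EvSet M)

/-- `M` is a Fitting model for `J4_CS`: `R` is transitive. -/
def IsModelJ4 (CS : Set Formula) (M : Model) : Prop :=
  Transitive M.R ∧ AdmissibleJ4 CS M.R (EvSet M)

/-- `M` is a Fitting model for `JD4_CS`: `R` is serial and transitive. -/
def IsModelJD4 (CS : Set Formula) (M : Model) : Prop :=
  Serial M.R ∧ Transitive M.R ∧ AdmissibleJ4 CS M.R (EvSet M)

/-- `M` is a Fitting model for `LP_CS`: `R` is reflexive and transitive. -/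
def IsModelLP (CS : Set Formula) (M : Model) : Prop :=
  Reflexive M.R ∧ Transitive M.R ∧ AdmissibleJ4 CS M.R (EvSet M)

/-- `B` is a base for the evidence relation of `M`, and that evidence relation is
minimal (least) among the admissible ones (non-(j4) version) containing `B`. -/
def MinBaseBang (CS : Set Formula) (M : Model)
    (B : Set (Term × Formula × M.World)) : Prop :=
  B ⊆ EvSet M ∧
  ∀ E' : Set (Term × Formula × M.World),
    AdmissibleBang CS E' → B ⊆ E' → EvSet M ⊆ E'

/-- `B` is a base for the evidence relation of `M`, and that evidence relation is
minimal (least) among the admissible ones ((j4) version) containing `B`. -/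
def MinBaseJ4 (CS : Set Formula) (M : Model)
    (B : Set (Term × Formula × M.World)) : Prop :=
  B ⊆ EvSet M ∧
  ∀ E' : Set (Term × Formula × M.World),
    AdmissibleJ4 CS M.R E' → B ⊆ E' → EvSet M ⊆ E'

/-- `M` is finitary (non-(j4) version): finitely many worlds, the evidence relation
is the minimal admissible one over some finite base, and the valuation has finite graph. -/
def FinitaryBang (CS : Set Formula) (M : Model) : Prop :=
  Finite M.World ∧
  (∃ B : Set (Term × Formula × M.World), B.Finite ∧ MinBaseBang CS M B) ∧
  (ValSet M).Finite

/-- `M` is finitary ((j4) version): finitely many worlds, the evidence relation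
is the minimal admissible one over some finite base, and the valuation has finite graph. -/
def FinitaryJ4 (CS : Set Formula) (M : Model) : Prop :=
  Finite M.World ∧
  (∃ B : Set (Term × Formula × M.World), B.Finite ∧ MinBaseJ4 CS M B) ∧
  (ValSet M).Finite

/-! Mkrtychev's observation: a formula unprovable in `LP_CS` already fails in a one-world
model. Take a maximal consistent set `m ∋ ¬A`, let the evidence be generated by the assertions
`t:C` that are subformulas of `A` lying in `m`, and let the atoms of `A` lying in `m` be true.
Both generating sets inject into the subformulas of `A`, so they have at most `|A|` elements.
In the truth lemma for `t:C`, membership in `m` gives base evidence and, by (jt), `C ∈ m`;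
conversely, all generated evidence is derivable from `m` by (A2), (A3), (j4) and (AN). -/

inductive Deriv (CS Γ : Set Formula) : Formula → Prop
  | hyp {A : Formula} : A ∈ Γ → Deriv CS Γ A
  | ax {A : Formula} : AxLP A → Deriv CS Γ A
  | mp {A B : Formula} : Deriv CS Γ (A.impl B) → Deriv CS Γ A → Deriv CS Γ B
  | an {c : ℕ} {A : Formula} : Formula.just (Term.const c) A ∈ CS →
      Deriv CS Γ (Formula.just (Term.const c) A)

namespace Deriv

variable {CS Γ Δ : Set Formula}

theorem mono {B : Formula} (h : Deriv CS Γ B) (hΓΔ : Γ ⊆ Δ) : Deriv CS Δ B := by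
  induction h with
  | hyp h => exact hyp (hΓΔ h)
  | ax h => exact ax h
  | mp _ _ ih₁ ih₂ => exact mp ih₁ ih₂
  | an h => exact an h

theorem derivS_of_empty {A : Formula} (h : Deriv CS ∅ A) : DerivS AxLP CS A := by
  induction h with
  | hyp h => exact absurd h (Set.notMem_empty _)
  | ax h => exact .ax h
  | mp _ _ ih₁ ih₂ => exact .mp ih₁ ih₂
  | an h => exact .an _ _ h

theorem imp_self (A : Formula) : Deriv CS Γ (A.impl A) :=
  mp (mp (ax (Ax.s A (A.impl A) A)) (ax (Ax.k A (A.impl A)))) (ax (Ax.k A A))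

theorem imp_intro {A B : Formula} (h : Deriv CS (insert A Γ) B) : Deriv CS Γ (A.impl B) := by
  induction h with
  | hyp h =>
    rcases h with rfl | h
    · exact imp_self _
    · exact mp (ax (Ax.k _ A)) (hyp h)
  | ax h => exact mp (ax (Ax.k _ A)) (ax h)
  | an h => exact mp (ax (Ax.k _ A)) (an h)
  | mp _ _ ih₁ ih₂ => exact mp (mp (ax (Ax.s A _ _)) ih₁) ih₂

theorem imp_trans {A B C : Formula} (h₁ : Deriv CS Γ (A.impl B))
    (h₂ : Deriv CS Γ (B.impl C)) :
    Deriv CS Γ (A.impl C) :=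
  imp_intro <| mp (h₂.mono (Set.subset_insert _ _))
    (mp (h₁.mono (Set.subset_insert _ _)) (hyp (Set.mem_insert _ _)))

theorem neg_imp (C B : Formula) : Deriv CS Γ ((C.neg).impl (C.impl B)) :=
  imp_trans (ax (Ax.k C.neg B.neg)) (ax (Ax.dn B C))

theorem of_neg_imp_falsum {A : Formula} (h : Deriv CS Γ (A.neg.impl Formula.falsum)) :
    Deriv CS Γ A :=
  mp (mp (ax (Ax.dn A _)) h) (imp_self _)

theorem falsum_of_neg {C : Formula} (h₁ : Deriv CS Γ C) (h₂ : Deriv CS Γ C.neg) :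
    Deriv CS Γ Formula.falsum :=
  mp (mp (neg_imp C _) h₂) h₁

theorem or_inl {X Y : Formula} (h : Deriv CS Γ X) : Deriv CS Γ (X.or Y) :=
  imp_intro (mp (mp (neg_imp X Y) (hyp (Set.mem_insert _ _))) (h.mono (Set.subset_insert _ _)))

theorem or_inr {X Y : Formula} (h : Deriv CS Γ Y) : Deriv CS Γ (X.or Y) :=
  mp (ax (Ax.k Y X.neg)) h

theorem exists_of_sUnion {c : Set (Set Formula)} (hc : IsChain (· ⊆ ·) c) (hne : c.Nonempty)
    {B : Formula} (h : Deriv CS (⋃₀ c) B) : ∃ Δ ∈ c, Deriv CS Δ B := by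
  induction h with
  | hyp h => obtain ⟨Δ, hΔ, hB⟩ := h; exact ⟨Δ, hΔ, hyp hB⟩
  | ax h => exact ⟨hne.some, hne.some_mem, ax h⟩
  | an h => exact ⟨hne.some, hne.some_mem, an h⟩
  | mp _ _ ih₁ ih₂ =>
    obtain ⟨Δ₁, hΔ₁, h₁⟩ := ih₁
    obtain ⟨Δ₂, hΔ₂, h₂⟩ := ih₂
    rcases hc.total hΔ₁ hΔ₂ with hle | hle
    · exact ⟨Δ₂, hΔ₂, mp (h₁.mono hle) h₂⟩
    · exact ⟨Δ₁, hΔ₁, mp h₁ (h₂.mono hle)⟩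

end Deriv

def Consistent (CS Γ : Set Formula) : Prop := ¬ Deriv CS Γ Formula.falsum

def MaxConsistent (CS m : Set Formula) : Prop := Maximal (Consistent CS) m

theorem exists_maxConsistent {CS Γ : Set Formula} (hΓ : Consistent CS Γ) :
    ∃ m, Γ ⊆ m ∧ MaxConsistent CS m :=
  zorn_subset_nonempty {Δ | Consistent CS Δ}
    (fun c hcS hc hne => ⟨⋃₀ c, fun hd => by
      obtain ⟨Δ, hΔ, hd⟩ := hd.exists_of_sUnion hc hne
      exact hcS hΔ hd, fun _ hs => Set.subset_sUnion_of_mem hs⟩) Γ hΓ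

theorem consistent_neg_of_not_derivS {CS : Set Formula} {A : Formula}
    (hA : ¬ DerivS AxLP CS A) : Consistent CS {A.neg} := fun h =>
  hA (Deriv.of_neg_imp_falsum (Deriv.imp_intro (by simpa using h))).derivS_of_empty

namespace MaxConsistent

variable {CS m : Set Formula}

theorem mem_of_deriv (hm : MaxConsistent CS m) {B : Formula} (h : Deriv CS m B) : B ∈ m :=
  Maximal.mem_of_prop_insert hm fun hf => Maximal.prop hm (.mp (Deriv.imp_intro hf) h)

theorem imp_falsum_of_notMem (hm : MaxConsistent CS m) {B : Formula} (h : B ∉ m) :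
    Deriv CS m (B.impl Formula.falsum) :=
  Deriv.imp_intro (not_not.mp fun hcon => h (Maximal.mem_of_prop_insert hm hcon))

theorem neg_mem_iff (hm : MaxConsistent CS m) {C : Formula} : C.neg ∈ m ↔ C ∉ m := by
  refine ⟨fun hn hC => Maximal.prop hm (Deriv.falsum_of_neg (.hyp hC) (.hyp hn)), fun hC => ?_⟩
  by_contra hn
  -- from `C → ⊥` and `¬C → ⊥` the axiom (dn) yields `C`, hence `⊥`
  exact Maximal.prop hm (.mp (hm.imp_falsum_of_notMem hC)
    (Deriv.of_neg_imp_falsum (hm.imp_falsum_of_notMem hn)))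

theorem impl_mem_iff (hm : MaxConsistent CS m) {C D : Formula} :
    C.impl D ∈ m ↔ (C ∈ m → D ∈ m) := by
  refine ⟨fun h hC => hm.mem_of_deriv (.mp (.hyp h) (.hyp hC)), fun h => ?_⟩
  by_cases hC : C ∈ m
  · exact hm.mem_of_deriv (.mp (.ax (Ax.k D C)) (.hyp (h hC)))
  · exact hm.mem_of_deriv (.mp (Deriv.neg_imp C D) (.hyp (hm.neg_mem_iff.mpr hC)))

end MaxConsistent

def Formula.subf : Formula → Finset Formula
  | .atom n => {Formula.atom n}
  | .neg A => insert (Formula.neg A) A.subf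
  | .impl A B => insert (Formula.impl A B) (A.subf ∪ B.subf)
  | .just t A => insert (Formula.just t A) A.subf

namespace Formula

theorem mem_subf_self (A : Formula) : A ∈ A.subf := by
  cases A <;> simp [subf]

theorem subf_subset_of_mem {A B : Formula} (h : B ∈ A.subf) : B.subf ⊆ A.subf := by
  induction A with
  | atom n => simp_all [subf]
  | neg A ih =>
    rcases Finset.mem_insert.mp h with rfl | h
    · rfl
    · exact (ih h).trans (Finset.subset_insert _ _)
  | impl A B ihA ihB =>
    rcases Finset.mem_insert.mp h with rfl | h
    · rfl
    rcases Finset.mem_union.mp h with h | h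
    · exact (ihA h).trans (Finset.subset_union_left.trans (Finset.subset_insert _ _))
    · exact (ihB h).trans (Finset.subset_union_right.trans (Finset.subset_insert _ _))
  | just t A ih =>
    rcases Finset.mem_insert.mp h with rfl | h
    · rfl
    · exact (ih h).trans (Finset.subset_insert _ _)

theorem card_subf_le_size (A : Formula) : A.subf.card ≤ A.size := by
  induction A with
  | atom n => simp [subf, size]
  | neg A ih => grw [subf, Finset.card_insert_le, ih]; rfl
  | impl A B ihA ihB =>
    grw [subf, Finset.card_insert_le, Finset.card_union_le, ihA, ihB]; rfl
  | just t A ih => grw [subf, Finset.card_insert_le, ih]; simp only [size]; omega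

theorem finite_and_ncard_le_size_of_injOn {α : Type*} {X : Set α} {A : Formula}
    (f : α → Formula) (hf : Set.MapsTo f X A.subf) (hinj : Set.InjOn f X) :
    X.Finite ∧ X.ncard ≤ A.size :=
  ⟨A.subf.finite_toSet.of_injOn hf hinj,
    (Set.ncard_le_ncard_of_injOn f hf hinj A.subf.finite_toSet).trans
      ((Set.ncard_coe_finset _).trans_le A.card_subf_le_size)⟩

end Formula

-- The least admissible evidence relation over `B` on a single world, where the
-- monotonicity condition is vacuous.
inductive EvClosure (CS : Set Formula) (B : Set (Term × Formula)) : Term → Formula → Prop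
  | base {t A} : (t, A) ∈ B → EvClosure CS B t A
  | suml {s t A} : EvClosure CS B s A → EvClosure CS B (Term.sum s t) A
  | sumr {s t A} : EvClosure CS B t A → EvClosure CS B (Term.sum s t) A
  | app {s t A C} : EvClosure CS B s (A.impl C) → EvClosure CS B t A →
      EvClosure CS B (Term.app s t) C
  | cs {c A} : Formula.just (Term.const c) A ∈ CS → EvClosure CS B (Term.const c) A
  | bang {t A} : EvClosure CS B t A → EvClosure CS B (Term.bang t) (Formula.just t A)

theorem EvClosure.deriv {CS Γ : Set Formula} {B : Set (Term × Formula)}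
    (hB : ∀ p ∈ B, Formula.just p.1 p.2 ∈ Γ) {t : Term} {C : Formula}
    (h : EvClosure CS B t C) : Deriv CS Γ (Formula.just t C) := by
  induction h with
  | base h => exact .hyp (hB _ h)
  | suml _ ih => exact .mp (.ax (Ax.a3 _ _ _)) ih.or_inl
  | sumr _ ih => exact .mp (.ax (Ax.a3 _ _ _)) ih.or_inr
  | app _ _ ih₁ ih₂ => exact .mp (.mp (.ax (Ax.a2 _ _ _ _)) ih₁) ih₂
  | cs h => exact .an h
  | bang _ ih => exact .mp (.ax (Ax.j4 _ _ rfl)) ih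

def mkrtychevModel (CS : Set Formula) (B : Set (Term × Formula)) (V : Set ℕ) : Model where
  World := Unit
  nonempty := ⟨()⟩
  R _ _ := True
  E t A _ := EvClosure CS B t A
  val n _ := n ∈ V

section MkrtychevModel

variable (CS : Set Formula) (B : Set (Term × Formula)) (V : Set ℕ)

theorem isModelLP_mkrtychevModel : IsModelLP CS (mkrtychevModel CS B V) :=
  ⟨fun _ => trivial, fun _ _ _ _ _ => trivial,
    fun _ _ _ _ h => h.elim .suml .sumr, fun _ _ _ _ _ => .app, fun _ _ _ => .cs,
    fun _ _ _ => .bang, fun _ _ _ _ h _ => h⟩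

theorem minBaseJ4_mkrtychevModel :
    MinBaseJ4 CS (mkrtychevModel CS B V) {x | (x.1, x.2.1) ∈ B} := by
  refine ⟨fun _ => .base, fun E hE hBE x hx => ?_⟩
  obtain ⟨hsum, happ, hcs, hbang, -⟩ := hE
  suffices ∀ t C, EvClosure CS B t C → (t, C, ()) ∈ E from this x.1 x.2.1 hx
  intro t C h
  induction h with
  | base h => exact hBE h
  | suml _ ih => exact hsum _ _ _ () (.inl ih)
  | sumr _ ih => exact hsum _ _ _ () (.inr ih)
  | app _ _ ih₁ ih₂ => exact happ _ _ _ _ () ih₁ ih₂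
  | cs h => exact hcs _ _ () h
  | bang _ ih => exact hbang _ _ () ih

variable {CS B V} {A : Formula}

theorem finite_and_ncard_base_le_size (hB : ∀ p ∈ B, Formula.just p.1 p.2 ∈ A.subf) :
    {x : Term × Formula × Unit | (x.1, x.2.1) ∈ B}.Finite ∧
      {x : Term × Formula × Unit | (x.1, x.2.1) ∈ B}.ncard ≤ A.size :=
  A.finite_and_ncard_le_size_of_injOn (fun x => .just x.1 x.2.1) (fun _ hx => hB _ hx)
    fun _ _ _ _ h => Prod.ext (Formula.just.inj h).1 (Prod.ext (Formula.just.inj h).2 rfl)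

theorem finite_and_ncard_valSet_le_size (hV : ∀ n ∈ V, Formula.atom n ∈ A.subf) :
    (ValSet (mkrtychevModel CS B V)).Finite ∧ (ValSet (mkrtychevModel CS B V)).ncard ≤ A.size :=
  A.finite_and_ncard_le_size_of_injOn (X := (ValSet (mkrtychevModel CS B V) : Set (Unit × ℕ)))
    (fun p => .atom p.2) (fun _ hp => hV _ hp) fun _ _ _ _ h => Prod.ext rfl (Formula.atom.inj h)

end MkrtychevModel

def canonicalBase (A : Formula) (m : Set Formula) : Set (Term × Formula) :=
  {p | Formula.just p.1 p.2 ∈ A.subf ∧ Formula.just p.1 p.2 ∈ m}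

def canonicalAtoms (A : Formula) (m : Set Formula) : Set ℕ :=
  {n | Formula.atom n ∈ A.subf ∧ Formula.atom n ∈ m}

def canonicalModel (CS : Set Formula) (A : Formula) (m : Set Formula) : Model :=
  mkrtychevModel CS (canonicalBase A m) (canonicalAtoms A m)

theorem sat_canonicalModel_iff {CS m : Set Formula} (hm : MaxConsistent CS m)
    {A C : Formula} (hC : C ∈ A.subf) (w : (canonicalModel CS A m).World) :
    Sat (canonicalModel CS A m) C w ↔ C ∈ m := by
  induction C generalizing w with
  | atom n => exact and_iff_right hC
  | neg C ih =>
    have hC' : C ∈ A.subf :=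
      Formula.subf_subset_of_mem hC (by simp [Formula.subf, C.mem_subf_self])
    rw [hm.neg_mem_iff, ← ih hC' w]
    rfl
  | impl C D ihC ihD =>
    have hC' : C ∈ A.subf :=
      Formula.subf_subset_of_mem hC (by simp [Formula.subf, C.mem_subf_self])
    have hD' : D ∈ A.subf :=
      Formula.subf_subset_of_mem hC (by simp [Formula.subf, D.mem_subf_self])
    rw [hm.impl_mem_iff, ← ihC hC' w, ← ihD hD' w]
    rfl
  | just t C ih =>
    have hC' : C ∈ A.subf :=
      Formula.subf_subset_of_mem hC (by simp [Formula.subf, C.mem_subf_self])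
    refine ⟨fun h => hm.mem_of_deriv (EvClosure.deriv (fun _ hp => hp.2) h.1),
      fun h => ⟨.base ⟨hC, h⟩, fun v _ => (ih hC' v).mpr ?_⟩⟩
    exact hm.mem_of_deriv (.mp (.ax (Ax.jt t C rfl)) (.hyp h))

theorem strong_finitary_model_property_LP_general (CS : Set Formula) :
    ∃ f g h : ℕ → ℕ, Computable f ∧ Computable g ∧ Computable h ∧
      ∀ A : Formula, ¬ DerivS AxLP CS A →
        ∃ M : Model, IsModelLP CS M ∧
          Finite M.World ∧ (ValSet M).Finite ∧
          (∃ B : Set (Term × Formula × M.World),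
            B.Finite ∧ MinBaseJ4 CS M B ∧ B.ncard ≤ g A.size) ∧
          (∃ w : M.World, ¬ Sat M A w) ∧
          Nat.card M.World ≤ f A.size ∧
          (ValSet M).ncard ≤ h A.size := by
  refine ⟨fun _ => 1, id, id, .const 1, .id, .id, fun A hA => ?_⟩
  obtain ⟨m, hAm, hm⟩ := exists_maxConsistent (consistent_neg_of_not_derivS hA)
  have hval := finite_and_ncard_valSet_le_size (CS := CS) (B := canonicalBase A m)
    (V := canonicalAtoms A m) fun _ hn => hn.1
  have hbase := finite_and_ncard_base_le_size (B := canonicalBase A m) fun _ hp => hp.1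
  refine ⟨canonicalModel CS A m, isModelLP_mkrtychevModel .., inferInstanceAs (Finite Unit),
    hval.1, ⟨_, hbase.1, minBaseJ4_mkrtychevModel .., hbase.2⟩,
    ⟨(), fun hA' => (hm.neg_mem_iff).mp (hAm (Set.mem_singleton _))
      ((sat_canonicalModel_iff hm A.mem_subf_self ()).mp hA')⟩,
    (Nat.card_unique (α := Unit)).le, hval.2⟩

/-- Strong finitary model property of `LP_CS`: for a constant
specification `CS` there are computable functions `f, g, h` such that every formula `A`
not derivable in `LP_CS` fails at some world of a finitary Fitting model for `LP_CS`
whose set of worlds, finite evidence base, and valuation graph are bounded in size by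
`f |A|`, `g |A|`, and `h |A|` respectively. -/
theorem strong_finitary_model_property_LP (CS : Set Formula)
    (hCS : ConstSpec AxLP CS) :
    ∃ f g h : ℕ → ℕ, Computable f ∧ Computable g ∧ Computable h ∧
      ∀ A : Formula, ¬ DerivS AxLP CS A →
        ∃ M : Model, IsModelLP CS M ∧
          Finite M.World ∧ (ValSet M).Finite ∧
          (∃ B : Set (Term × Formula × M.World),
            B.Finite ∧ MinBaseJ4 CS M B ∧ B.ncard ≤ g A.size) ∧
          (∃ w : M.World, ¬ Sat M A w) ∧
          Nat.card M.World ≤ f A.size ∧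
          (ValSet M).ncard ≤ h A.size :=
  strong_finitary_model_property_LP_general CS

end JustificationLogic
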